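/- arXiv:1201.5792 — 2 statements merged into one kernel-verified Lean document; each statement's English description precedes it below -/
import Mathlib

section
/- Let K be a field with primitive k-th root of unity ξ_k, and σ_τ ∈ Aut(K[x₁,…,xₙ]) the diagonal automorphism σ_τ(xᵢ) = ξ_k^{νᵢ}xᵢ. Fix a monomial ordering. For nonzero polynomials f, g ∈ K[x₁,…,xₙ], let spoly(f,g) = X^{γ−α}·f − (LC(f)/LC(g))·X^{γ−β}·g, where X^α = LM(f), X^β = LM(g), X^γ = lcm(X^α, X^β). Then σ_τ(spoly(f,g)) = ξ_k^{ν_γ − ν_α} · spoly(σ_τ(f), σ_τ(g)), where ξ_k^{ν_α}, ξ_k^{ν_γ} are the eigenvalues of σ_τ on X^α and X^γ respectively. -/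
open MvPolynomial

/-- The leading exponent of `f` with respect to a monomial order `m`. -/
noncomputable def MonomialOrder.mDegree {σ : Type*} (m : MonomialOrder σ) {R : Type*}
    [CommSemiring R] (f : MvPolynomial σ R) : σ →₀ ℕ :=
  m.toSyn.symm (f.support.sup fun α => m.toSyn α)

/-- The leading coefficient of `f` with respect to a monomial order `m`. -/
noncomputable def MonomialOrder.mLeadingCoeff {σ : Type*} (m : MonomialOrder σ) {R : Type*}
    [CommSemiring R] (f : MvPolynomial σ R) : R :=
  f.coeff (m.mDegree f)

/-- Buchberger's S-polynomial with respect to a monomial order `m`. -/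
noncomputable def MonomialOrder.spoly {σ : Type*} (m : MonomialOrder σ) {K : Type*}
    [Field K] (f g : MvPolynomial σ K) : MvPolynomial σ K :=
  monomial (m.mDegree f ⊔ m.mDegree g - m.mDegree f) (1 : K) * f -
    C (m.mLeadingCoeff f / m.mLeadingCoeff g) *
      (monomial (m.mDegree f ⊔ m.mDegree g - m.mDegree g) (1 : K) * g)

/-! A diagonal automorphism `xᵢ ↦ tᵢ • xᵢ` multiplies the coefficient of `X^δ` by the nonzero
eigenvalue `w δ = ∏ tᵢ ^ δᵢ`, which is multiplicative in `δ`. Hence it preserves supports, so leading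
monomials, and scales leading coefficients by `w α`. In the S-polynomial the two cofactors pick up
`w (γ - α) = w γ / w α` and `w (γ - β) = w γ / w β`, which combine into the common factor
`w γ / w α`. -/

namespace MvPolynomial

section monomialScale

variable {σ M : Type*} [CommMonoid M]

def monomialScale (t : σ → M) (δ : σ →₀ ℕ) : M :=
  δ.prod fun i e => t i ^ e

theorem monomialScale_add (t : σ → M) (δ ε : σ →₀ ℕ) :
    monomialScale t (δ + ε) = monomialScale t δ * monomialScale t ε :=
  Finsupp.prod_add_index' (fun _ => pow_zero _) fun _ => pow_add _

theorem monomialScale_pow_eq [Fintype σ] (ξ : M) (ν : σ → ℕ) (δ : σ →₀ ℕ) :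
    monomialScale (fun i => ξ ^ ν i) δ = ξ ^ ∑ i, ν i * δ i := by
  rw [monomialScale, Finsupp.prod_pow]
  simp only [← pow_mul, Finset.prod_pow_eq_pow_sum]

theorem monomialScale_ne_zero {M₀ : Type*} [CommMonoidWithZero M₀] [NoZeroDivisors M₀]
    [Nontrivial M₀] {t : σ → M₀} (ht : ∀ i, t i ≠ 0) (δ : σ →₀ ℕ) : monomialScale t δ ≠ 0 :=
  Finset.prod_ne_zero_iff.2 fun i _ => pow_ne_zero _ (ht i)

end monomialScale

section CommSemiring

variable {σ R : Type*} [CommSemiring R]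

def IsDiagonal (φ : MvPolynomial σ R →ₐ[R] MvPolynomial σ R) (t : σ → R) : Prop :=
  ∀ i, φ (X i) = t i • X i

variable {φ : MvPolynomial σ R →ₐ[R] MvPolynomial σ R} {t : σ → R}

theorem IsDiagonal.ne_zero [Nontrivial R] (hφ : IsDiagonal φ t) (hinj : Function.Injective φ)
    (i : σ) : t i ≠ 0 := by
  intro h
  refine X_ne_zero (R := R) i (hinj ?_)
  rw [hφ i, h, zero_smul, map_zero]

theorem IsDiagonal.map_monomial (hφ : IsDiagonal φ t) (δ : σ →₀ ℕ) (a : R) :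
    φ (monomial δ a) = monomialScale t δ • monomial δ a := by
  have hX : φ ∘ X = fun i => C (t i) * X i := _root_.funext fun i => by
    rw [Function.comp_apply, hφ i, smul_eq_C_mul]
  rw [aeval_unique φ, aeval_monomial, hX, monomial_eq, smul_eq_C_mul]
  simp only [mul_pow, Finsupp.prod_mul, ← map_pow, ← map_finsuppProd, algebraMap_eq, monomialScale]
  ring

theorem IsDiagonal.coeff_map (hφ : IsDiagonal φ t) (p : MvPolynomial σ R) (δ : σ →₀ ℕ) :
    coeff δ (φ p) = monomialScale t δ * coeff δ p := by
  classical
  induction p using MvPolynomial.induction_on' with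
  | monomial ε a =>
    rw [hφ.map_monomial, coeff_smul, coeff_monomial, smul_eq_mul]
    split_ifs with h
    · rw [h]
    · simp
  | add p q hp hq => rw [map_add, coeff_add, coeff_add, hp, hq, mul_add]

variable [NoZeroDivisors R] [Nontrivial R]

theorem IsDiagonal.support_map (hφ : IsDiagonal φ t) (ht : ∀ i, t i ≠ 0) (p : MvPolynomial σ R) :
    (φ p).support = p.support := by
  ext δ
  simp [mem_support_iff, hφ.coeff_map, monomialScale_ne_zero ht]

theorem IsDiagonal.mDegree_map (hφ : IsDiagonal φ t) (ht : ∀ i, t i ≠ 0) (m : MonomialOrder σ)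
    (p : MvPolynomial σ R) : m.mDegree (φ p) = m.mDegree p := by
  rw [MonomialOrder.mDegree, MonomialOrder.mDegree, hφ.support_map ht]

theorem IsDiagonal.mLeadingCoeff_map (hφ : IsDiagonal φ t) (ht : ∀ i, t i ≠ 0)
    (m : MonomialOrder σ) (p : MvPolynomial σ R) :
    m.mLeadingCoeff (φ p) = monomialScale t (m.mDegree p) * m.mLeadingCoeff p := by
  rw [MonomialOrder.mLeadingCoeff, MonomialOrder.mLeadingCoeff, hφ.mDegree_map ht, hφ.coeff_map]

end CommSemiring

theorem IsDiagonal.map_spoly {σ K : Type*} [Field K]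
    {φ : MvPolynomial σ K →ₐ[K] MvPolynomial σ K} {t : σ → K} (hφ : IsDiagonal φ t)
    (ht : ∀ i, t i ≠ 0) (m : MonomialOrder σ) (f g : MvPolynomial σ K) :
    φ (m.spoly f g) = (monomialScale t (m.mDegree f ⊔ m.mDegree g) /
      monomialScale t (m.mDegree f)) • m.spoly (φ f) (φ g) := by
  have hφC (c : K) : φ (C c) = C c := φ.commutes c
  simp only [MonomialOrder.spoly, hφ.mDegree_map ht, hφ.mLeadingCoeff_map ht, map_sub, map_mul,
    hφ.map_monomial, hφC, smul_eq_C_mul]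
  simp only [mul_sub, ← mul_assoc, ← C_mul]
  set α := m.mDegree f
  set β := m.mDegree g
  have hα : monomialScale t (α ⊔ β - α) * monomialScale t α = monomialScale t (α ⊔ β) := by
    rw [← monomialScale_add, tsub_add_cancel_of_le le_sup_left]
  have hβ : monomialScale t (α ⊔ β - β) * monomialScale t β = monomialScale t (α ⊔ β) := by
    rw [← monomialScale_add, tsub_add_cancel_of_le le_sup_right]
  have hα0 := monomialScale_ne_zero ht α
  have hβ0 := monomialScale_ne_zero ht β
  congr 4
  · exact eq_div_of_mul_eq hα0 hα
  · rw [← hβ]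
    field_simp

end MvPolynomial

theorem diagonal_automorphism_spoly_general (n : ℕ) (K : Type*) [Field K]
    (ξ : K) (ν : Fin n → ℕ)
    (φ : MvPolynomial (Fin n) K ≃ₐ[K] MvPolynomial (Fin n) K)
    (hφ : ∀ i, φ (X i) = (ξ ^ ν i) • X i)
    (m : MonomialOrder (Fin n))
    (f g : MvPolynomial (Fin n) K) :
    φ (m.spoly f g) =
      (ξ ^ (∑ i, ν i * (m.mDegree f ⊔ m.mDegree g) i) / ξ ^ (∑ i, ν i * m.mDegree f i)) •
        m.spoly (φ f) (φ g) := by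
  have hdiag : IsDiagonal φ.toAlgHom (fun i => ξ ^ ν i) := hφ
  have h := hdiag.map_spoly (hdiag.ne_zero φ.injective) m f g
  rwa [monomialScale_pow_eq, monomialScale_pow_eq] at h

/-- For a diagonal automorphism `σ_τ(xᵢ) = ξ^{νᵢ}xᵢ` of `K[x₁,…,xₙ]`, one has
`σ_τ(spoly(f,g)) = ξ^{ν_γ − ν_α} · spoly(σ_τ(f), σ_τ(g))`, where `ξ^{ν_α}`, `ξ^{ν_γ}`
are the eigenvalues of `σ_τ` on `LM(f)` and `lcm(LM(f), LM(g))` respectively. -/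
theorem diagonal_automorphism_spoly (n k : ℕ) (K : Type*) [Field K]
    (ξ : K) (hξ : IsPrimitiveRoot ξ k) (ν : Fin n → ℕ)
    (φ : MvPolynomial (Fin n) K ≃ₐ[K] MvPolynomial (Fin n) K)
    (hφ : ∀ i, φ (X i) = (ξ ^ ν i) • X i)
    (m : MonomialOrder (Fin n))
    (f g : MvPolynomial (Fin n) K) (hf : f ≠ 0) (hg : g ≠ 0) :
    φ (m.spoly f g) =
      (ξ ^ (∑ i, ν i * (m.mDegree f ⊔ m.mDegree g) i) / ξ ^ (∑ i, ν i * m.mDegree f i)) •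
        m.spoly (φ f) (φ g) :=
  diagonal_automorphism_spoly_general n K ξ ν φ hφ m f g
end

section
/- Let K be a field with primitive k-th root of unity ξ_k, σ_τ ∈ Aut(K[x₁,…,xₙ]) a diagonal automorphism σ_τ(xᵢ) = ξ_k^{νᵢ}xᵢ, and I a σ_τ-symmetric ideal. If f ∈ I is an eigenvector of σ_τ with σ_τ(f) = ξ_k^{a} f, and g ∈ I with σ_τ(g) = ξ_k^{b} g, then spoly(f,g) is also an eigenvector of σ_τ; more generally, the K-linear span of σ_τ-eigenvectors in I is closed under taking S-polynomials of eigenvector pairs. -/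
/-!
A diagonal automorphism with `xᵢ ↦ wᵢ xᵢ` scales the monomial `x^α` by `χ(α) = ∏ wᵢ^{αᵢ}`, and
`χ` is multiplicative in `α`. Comparing coefficients, a nonzero eigenvector has eigenvalue `χ(α)`
for every `α` in its support, in particular for its leading exponent. So with `γ = lcm` of the
leading exponents, both `x^{γ-α} f` and `x^{γ-β} g` are eigenvectors of eigenvalue `χ(γ)`, and
so is their combination `spoly f g`, which moreover lies in the ideal.
-/

open MvPolynomial

namespace MvPolynomial

variable {σ R : Type*} [CommSemiring R]

theorem map_monomial_of_map_X_eq_smul (φ : MvPolynomial σ R →ₐ[R] MvPolynomial σ R)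
    (w : σ → R) (hφ : ∀ i, φ (X i) = w i • X i) (α : σ →₀ ℕ) (c : R) :
    φ (monomial α c) = (α.prod fun i e => w i ^ e) • monomial α c := by
  induction α using Finsupp.induction generalizing c with
  | zero => simp [← C_apply]
  | single_add i e α hi he ih =>
    rw [Finsupp.prod_add_index' (by simp) (fun _ _ _ => pow_add _ _ _),
      Finsupp.prod_single_index (h := fun i e => w i ^ e) (pow_zero _), ← one_mul c,
      ← monomial_mul, map_mul, ih, ← X_pow_eq_monomial, map_pow, hφ, smul_pow, smul_mul_smul_comm, X_pow_eq_monomial,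
      monomial_mul, one_mul]

theorem coeff_map_of_map_X_eq_smul (φ : MvPolynomial σ R →ₐ[R] MvPolynomial σ R)
    (w : σ → R) (hφ : ∀ i, φ (X i) = w i • X i) (f : MvPolynomial σ R) (α : σ →₀ ℕ) :
    (φ f).coeff α = (α.prod fun i e => w i ^ e) * f.coeff α := by
  classical
  induction f using MvPolynomial.induction_on' with
  | monomial β c =>
    rw [map_monomial_of_map_X_eq_smul φ w hφ, coeff_smul, coeff_monomial, smul_eq_mul]
    split_ifs with h <;> simp [h]
  | add p q hp hq => rw [map_add, coeff_add, coeff_add, hp, hq, mul_add]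

theorem eigenvalue_eq_of_mem_support [IsDomain R] (φ : MvPolynomial σ R →ₐ[R] MvPolynomial σ R)
    (w : σ → R) (hφ : ∀ i, φ (X i) = w i • X i) {f : MvPolynomial σ R} {c : R}
    (hf : φ f = c • f) {α : σ →₀ ℕ} (hα : α ∈ f.support) :
    (α.prod fun i e => w i ^ e) = c := by
  refine mul_right_cancel₀ (mem_support_iff.mp hα) ?_
  rw [← coeff_map_of_map_X_eq_smul φ w hφ, hf, coeff_smul, smul_eq_mul]

theorem map_monomial_mul_of_mem_support [IsDomain R]
    (φ : MvPolynomial σ R →ₐ[R] MvPolynomial σ R) (w : σ → R) (hφ : ∀ i, φ (X i) = w i • X i)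
    {f : MvPolynomial σ R} {c : R} (hf : φ f = c • f) {α γ : σ →₀ ℕ} (hα : α ∈ f.support)
    (hαγ : α ≤ γ) :
    φ (monomial (γ - α) 1 * f) = (γ.prod fun i e => w i ^ e) • (monomial (γ - α) 1 * f) := by
  rw [map_mul, map_monomial_of_map_X_eq_smul φ w hφ, hf, smul_mul_smul_comm,
    ← eigenvalue_eq_of_mem_support φ w hφ hf hα,
    ← Finsupp.prod_add_index' (by simp) (fun _ _ _ => pow_add _ _ _), tsub_add_cancel_of_le hαγ]

end MvPolynomial

namespace MonomialOrder

variable {σ K : Type*} [Field K] (m : MonomialOrder σ)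

theorem mDegree_mem_support {R : Type*} [CommSemiring R] {f : MvPolynomial σ R} (hf : f ≠ 0) :
    m.mDegree f ∈ f.support :=
  m.degree_mem_support hf

theorem spoly_mem_ideal {I : Ideal (MvPolynomial σ K)} {f g : MvPolynomial σ K} (hf : f ∈ I)
    (hg : g ∈ I) : m.spoly f g ∈ I :=
  sub_mem (I.mul_mem_left _ hf) (I.mul_mem_left _ (I.mul_mem_left _ hg))

theorem map_spoly_of_map_X_eq_smul (φ : MvPolynomial σ K →ₐ[K] MvPolynomial σ K) (w : σ → K)
    (hφ : ∀ i, φ (X i) = w i • X i) {f g : MvPolynomial σ K} (hf0 : f ≠ 0) (hg0 : g ≠ 0)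
    {a b : K} (hf : φ f = a • f) (hg : φ g = b • g) :
    φ (m.spoly f g) = ((m.mDegree f ⊔ m.mDegree g).prod fun i e => w i ^ e) • m.spoly f g := by
  rw [spoly, C_mul', map_sub, map_smul,
    map_monomial_mul_of_mem_support φ w hφ hf (m.mDegree_mem_support hf0) le_sup_left,
    map_monomial_mul_of_mem_support φ w hφ hg (m.mDegree_mem_support hg0) le_sup_right,
    smul_comm (m.mLeadingCoeff f / m.mLeadingCoeff g), ← smul_sub]

end MonomialOrder

theorem Finsupp.prod_pow_pow {ι M : Type*} [CommMonoid M] (x : M) (ν : ι → ℕ) (α : ι →₀ ℕ) :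
    (α.prod fun i e => (x ^ ν i) ^ e) = x ^ α.sum fun i e => ν i * e := by
  simp_rw [← pow_mul]
  exact Finset.prod_pow_eq_pow_sum _ _ _

theorem spoly_of_eigenvectors_is_eigenvector_general (n : ℕ) (K : Type*) [Field K]
    (ξ : K) (ν : Fin n → ℕ)
    (φ : MvPolynomial (Fin n) K ≃ₐ[K] MvPolynomial (Fin n) K)
    (hφ : ∀ i, φ (X i) = (ξ ^ ν i) • X i)
    (m : MonomialOrder (Fin n))
    (I : Ideal (MvPolynomial (Fin n) K))
    (f g : MvPolynomial (Fin n) K) (hf : f ∈ I) (hg : g ∈ I)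
    (hf0 : f ≠ 0) (hg0 : g ≠ 0) (a b : ℕ)
    (hfeig : φ f = (ξ ^ a) • f) (hgeig : φ g = (ξ ^ b) • g) :
    (∃ e : ℕ, φ (m.spoly f g) = (ξ ^ e) • m.spoly f g) ∧
      m.spoly f g ∈ Submodule.span K
        {h : MvPolynomial (Fin n) K | h ∈ I ∧ ∃ c : K, φ h = c • h} := by
  have hspoly := m.map_spoly_of_map_X_eq_smul φ.toAlgHom _ hφ hf0 hg0 hfeig hgeig
  rw [Finsupp.prod_pow_pow] at hspoly
  exact ⟨⟨_, hspoly⟩, Submodule.subset_span ⟨m.spoly_mem_ideal hf hg, _, hspoly⟩⟩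

/-- If `I` is symmetric under a diagonal automorphism `σ_τ(xᵢ) = ξ^{νᵢ}xᵢ` and
`f, g ∈ I` are eigenvectors of `σ_τ` with eigenvalues `ξ^a`, `ξ^b`, then `spoly(f,g)`
is again an eigenvector of `σ_τ`; in particular it lies in the `K`-linear span of the
`σ_τ`-eigenvectors contained in `I`. -/
theorem spoly_of_eigenvectors_is_eigenvector (n k : ℕ) (K : Type*) [Field K]
    (ξ : K) (hξ : IsPrimitiveRoot ξ k) (ν : Fin n → ℕ)
    (φ : MvPolynomial (Fin n) K ≃ₐ[K] MvPolynomial (Fin n) K)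
    (hφ : ∀ i, φ (X i) = (ξ ^ ν i) • X i)
    (m : MonomialOrder (Fin n))
    (I : Ideal (MvPolynomial (Fin n) K))
    (hsym : Ideal.map φ.toAlgHom.toRingHom I = I)
    (f g : MvPolynomial (Fin n) K) (hf : f ∈ I) (hg : g ∈ I)
    (hf0 : f ≠ 0) (hg0 : g ≠ 0) (a b : ℕ)
    (hfeig : φ f = (ξ ^ a) • f) (hgeig : φ g = (ξ ^ b) • g) :
    (∃ e : ℕ, φ (m.spoly f g) = (ξ ^ e) • m.spoly f g) ∧
      m.spoly f g ∈ Submodule.span K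
        {h : MvPolynomial (Fin n) K | h ∈ I ∧ ∃ c : K, φ h = c • h} :=
  spoly_of_eigenvectors_is_eigenvector_general n K ξ ν φ hφ m I f g hf hg hf0 hg0 a b hfeig hgeig
end
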